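/- arXiv:2010.13568 — 5 statements merged into one kernel-verified Lean document; each statement's English description precedes it below -/
import Mathlib

section
/- Let R_m = min{rank(A) : A ∈ S} and R_b = min{rank_B(A) : A ∈ S}, where S is the set of unrestricted least-squares minimizers. If R is an integer with R_b ≤ R < R_m, then the rank-constrained least-squares problem inf{F(A) : rank(A) ≤ R} does not attain its infimum (it has no solution). -/
open scoped BigOperators

noncomputable section

/-- The tensor `∑_{r<R} β_{1,r} ∘ ⋯ ∘ β_{D,r}` built from CP parameters. -/
def cpDecomp {D : ℕ} {p : Fin D → ℕ} (R : ℕ) (β : Fin R → ∀ d : Fin D, Fin (p d) → ℝ) :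
    (∀ d : Fin D, Fin (p d)) → ℝ :=
  fun i => ∑ r : Fin R, ∏ d : Fin D, β r d (i d)

/-- CP rank of an order-`D` tensor. -/
def cpRank {D : ℕ} {p : Fin D → ℕ} (A : (∀ d : Fin D, Fin (p d)) → ℝ) : ℕ :=
  sInf {R : ℕ | ∃ β : Fin R → ∀ d : Fin D, Fin (p d) → ℝ, A = cpDecomp R β}

/-- Frobenius norm of a tensor. -/
def frob {D : ℕ} {p : Fin D → ℕ} (A : (∀ d : Fin D, Fin (p d)) → ℝ) : ℝ :=
  Real.sqrt (∑ i, (A i) ^ 2)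

/-- Border rank: the least `R` such that the tensor is a Frobenius-norm limit of
tensors of CP rank at most `R`. -/
def borderRank {D : ℕ} {p : Fin D → ℕ} (A : (∀ d : Fin D, Fin (p d)) → ℝ) : ℕ :=
  sInf {R : ℕ | ∀ ε : ℝ, 0 < ε → ∃ B : (∀ d : Fin D, Fin (p d)) → ℝ,
    cpRank B ≤ R ∧ frob (A - B) < ε}

/-- Least-squares loss `F(A) = ∑ᵢ (yᵢ - ⟨A, Xᵢ⟩)²`. -/
def lsLoss {D n : ℕ} {p : Fin D → ℕ} (y : Fin n → ℝ)
    (X : Fin n → (∀ d : Fin D, Fin (p d)) → ℝ) (A : (∀ d : Fin D, Fin (p d)) → ℝ) : ℝ :=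
  ∑ i, (y i - ∑ j, A j * X i j) ^ 2

/-! A tensor of border rank `R` is a limit of tensors of rank at most `R`, so a minimizer of the
continuous loss over `{rank ≤ R}` also minimizes it over the closure of that set, which contains an
unrestricted minimizer of border rank `R_b ≤ R`. Hence it is itself an unrestricted minimizer, of
rank at most `R < R_m`, contradicting the definition of `R_m`. -/

lemma continuous_lsLoss {D n : ℕ} {p : Fin D → ℕ} (y : Fin n → ℝ)
    (X : Fin n → (∀ d : Fin D, Fin (p d)) → ℝ) :
    Continuous (lsLoss y X) := by
  unfold lsLoss
  fun_prop

lemma dist_le_frob_sub {D : ℕ} {p : Fin D → ℕ} (A B : (∀ d : Fin D, Fin (p d)) → ℝ) :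
    dist A B ≤ frob (A - B) := by
  refine (dist_pi_le_iff (Real.sqrt_nonneg _)).2 fun i => ?_
  calc dist (A i) (B i) = Real.sqrt ((A - B) i ^ 2) := by
        rw [Real.sqrt_sq_eq_abs, Real.dist_eq, Pi.sub_apply]
    _ ≤ frob (A - B) :=
        Real.sqrt_le_sqrt (Finset.single_le_sum (fun j _ => sq_nonneg ((A - B) j))
          (Finset.mem_univ i))

lemma mem_closure_setOf_cpRank_le_borderRank {D : ℕ} {p : Fin D → ℕ}
    (A : (∀ d : Fin D, Fin (p d)) → ℝ) :
    A ∈ closure {B | cpRank B ≤ borderRank A} := by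
  have hA : cpRank A ∈ {R : ℕ | ∀ ε : ℝ, 0 < ε → ∃ B : (∀ d : Fin D, Fin (p d)) → ℝ,
      cpRank B ≤ R ∧ frob (A - B) < ε} :=
    fun ε hε => ⟨A, le_rfl, by simpa [frob] using hε⟩
  refine Metric.mem_closure_iff.2 fun ε hε => ?_
  obtain ⟨B, hBrank, hBfrob⟩ := Nat.sInf_mem ⟨_, hA⟩ ε hε
  exact ⟨B, hBrank, (dist_le_frob_sub A B).trans_lt hBfrob⟩

/-- Let `S` be the set of unrestricted least-squares minimizers,
`R_m = min{rank(A) : A ∈ S}` and `R_b = min{rank_B(A) : A ∈ S}`.  If `R_b ≤ R < R_m`,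
then the rank-constrained least-squares problem `inf{F(A) : rank(A) ≤ R}` does not
attain its infimum (it has no solution). -/
theorem stmt1 {D n : ℕ} {p : Fin D → ℕ}
    (y : Fin n → ℝ) (X : Fin n → (∀ d : Fin D, Fin (p d)) → ℝ)
    (S : Set ((∀ d : Fin D, Fin (p d)) → ℝ))
    (hS : S = {A | ∀ B, lsLoss y X A ≤ lsLoss y X B})
    (Rm Rb R : ℕ)
    (hRm : Rm = sInf {r : ℕ | ∃ A ∈ S, cpRank A = r})
    (hRb : Rb = sInf {r : ℕ | ∃ A ∈ S, borderRank A = r})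
    (hR : Rb ≤ R) (hR' : R < Rm) :
    ¬ ∃ A : (∀ d : Fin D, Fin (p d)) → ℝ, cpRank A ≤ R ∧
      ∀ B : (∀ d : Fin D, Fin (p d)) → ℝ, cpRank B ≤ R → lsLoss y X A ≤ lsLoss y X B := by
  rintro ⟨A, hArank, hAmin⟩
  subst hS hRm hRb
  -- `sInf ∅ = 0`, so `R < R_m` is what guarantees that an unrestricted minimizer exists.
  obtain ⟨-, A₀, hA₀, -⟩ := Nat.nonempty_of_pos_sInf ((Nat.zero_le R).trans_lt hR')
  obtain ⟨Ab, hAb, hAbrank⟩ :=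
    Nat.sInf_mem (s := {r | ∃ A ∈ _, borderRank A = r}) ⟨_, A₀, hA₀, rfl⟩
  have hAb_closure : Ab ∈ closure {B | cpRank B ≤ R} :=
    closure_mono (fun B hB => hB.trans (hAbrank ▸ hR)) (mem_closure_setOf_cpRank_le_borderRank Ab)
  have hAmin_closure : IsMinOn (lsLoss y X) (closure {B | cpRank B ≤ R}) A :=
    IsMinOn.closure (fun B hB => hAmin B hB) (continuous_lsLoss y X).continuousOn
  have hA : ∀ B, lsLoss y X A ≤ lsLoss y X B :=
    fun B => (hAmin_closure hAb_closure).trans (hAb B)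
  exact hR'.not_ge ((Nat.sInf_le (s := {r | ∃ A ∈ _, cpRank A = r}) ⟨A, hA, rfl⟩).trans hArank)
end
end

section
/- Let D = 3 and suppose the design matrix Z ∈ ℝ^{n×p₁p₂p₃} has full column rank, rank(Z) = p₁p₂p₃, and y = Z vec(G_b), where G_b = v₁ ∘ w₂ ∘ w₃ + w₁ ∘ v₂ ∘ w₃ + w₁ ∘ w₂ ∘ v₃ with w_d, v_d ∈ ℝ^{p_d} a linearly independent pair for each d = 1,2,3. Then the rank-constrained least-squares problem inf{F(A) : rank(A) ≤ 2} does not attain its infimum (it has no solution). -/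
open scoped BigOperators
open Matrix

noncomputable section

/-- Outer product of three vectors, as an order-3 tensor. -/
def outer3 {p₁ p₂ p₃ : ℕ} (u : Fin p₁ → ℝ) (v : Fin p₂ → ℝ) (w : Fin p₃ → ℝ) :
    Fin p₁ × Fin p₂ × Fin p₃ → ℝ :=
  fun i => u i.1 * v i.2.1 * w i.2.2

/-- CP rank of an order-3 tensor: the least `R` such that the tensor is a sum of `R`
outer products. -/
def rank3 {p₁ p₂ p₃ : ℕ} (A : Fin p₁ × Fin p₂ × Fin p₃ → ℝ) : ℕ :=
  sInf {R : ℕ | ∃ (a : Fin R → Fin p₁ → ℝ) (b : Fin R → Fin p₂ → ℝ) (c : Fin R → Fin p₃ → ℝ),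
    A = fun i => ∑ r, a r i.1 * b r i.2.1 * c r i.2.2}

/-! ### Auxiliary lemmas -/

/-- The 2×2×2 "W tensor" equations have no rank-2 solution. -/
lemma core222 (a₁ a₂ b₁ b₂ c₁ c₂ : Fin 2 → ℝ)
    (h000 : a₁ 0 * b₁ 0 * c₁ 0 + a₂ 0 * b₂ 0 * c₂ 0 = 0)
    (h100 : a₁ 1 * b₁ 0 * c₁ 0 + a₂ 1 * b₂ 0 * c₂ 0 = 1)
    (h010 : a₁ 0 * b₁ 1 * c₁ 0 + a₂ 0 * b₂ 1 * c₂ 0 = 1)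
    (h001 : a₁ 0 * b₁ 0 * c₁ 1 + a₂ 0 * b₂ 0 * c₂ 1 = 1)
    (h110 : a₁ 1 * b₁ 1 * c₁ 0 + a₂ 1 * b₂ 1 * c₂ 0 = 0)
    (h101 : a₁ 1 * b₁ 0 * c₁ 1 + a₂ 1 * b₂ 0 * c₂ 1 = 0)
    (h011 : a₁ 0 * b₁ 1 * c₁ 1 + a₂ 0 * b₂ 1 * c₂ 1 = 0)
    (h111 : a₁ 1 * b₁ 1 * c₁ 1 + a₂ 1 * b₂ 1 * c₂ 1 = 0) : False := by
  set P : ℝ := (a₁ 0 * a₂ 1 - a₁ 1 * a₂ 0) * (b₁ 0 * b₂ 1 - b₁ 1 * b₂ 0) with hPdef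
  have key : ∀ t : ℝ, (c₁ 0 + t * c₁ 1) * (c₂ 0 + t * c₂ 1) * P = -1 := by
    intro t
    have e00 : a₁ 0 * b₁ 0 * (c₁ 0 + t * c₁ 1) + a₂ 0 * b₂ 0 * (c₂ 0 + t * c₂ 1) = t := by
      linear_combination h000 + t * h001
    have e11 : a₁ 1 * b₁ 1 * (c₁ 0 + t * c₁ 1) + a₂ 1 * b₂ 1 * (c₂ 0 + t * c₂ 1) = 0 := by
      linear_combination h110 + t * h111
    have e01 : a₁ 0 * b₁ 1 * (c₁ 0 + t * c₁ 1) + a₂ 0 * b₂ 1 * (c₂ 0 + t * c₂ 1) = 1 := by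
      linear_combination h010 + t * h011
    have e10 : a₁ 1 * b₁ 0 * (c₁ 0 + t * c₁ 1) + a₂ 1 * b₂ 0 * (c₂ 0 + t * c₂ 1) = 1 := by
      linear_combination h100 + t * h101
    rw [hPdef]
    linear_combination (a₁ 1 * b₁ 1 * (c₁ 0 + t * c₁ 1) + a₂ 1 * b₂ 1 * (c₂ 0 + t * c₂ 1)) * e00
      + t * e11 - (a₁ 1 * b₁ 0 * (c₁ 0 + t * c₁ 1) + a₂ 1 * b₂ 0 * (c₂ 0 + t * c₂ 1)) * e01 - e10
  have k0 := key 0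
  have k1 := key 1
  have km := key (-1)
  have h0 : c₁ 0 * c₂ 0 * P = -1 := by linear_combination k0
  have hq : c₁ 1 * c₂ 1 * P = 0 := by linear_combination k1 / 2 + km / 2 - k0
  have hsym : (c₁ 0 * c₂ 1 + c₁ 1 * c₂ 0) * P = 0 := by linear_combination k1 / 2 - km / 2
  have hP0 : P ≠ 0 := by intro h; rw [h, mul_zero] at h0; norm_num at h0
  have hc10 : c₁ 0 ≠ 0 := by intro h; rw [h] at h0; norm_num at h0
  have hc20 : c₂ 0 ≠ 0 := by intro h; rw [h] at h0; norm_num at h0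
  have hprod : c₁ 1 * c₂ 1 = 0 := by
    rcases mul_eq_zero.mp hq with h | h
    · exact h
    · exact absurd h hP0
  have hcc : c₁ 1 = 0 ∧ c₂ 1 = 0 := by
    rcases mul_eq_zero.mp hprod with h | h
    · refine ⟨h, ?_⟩
      have h' : c₁ 0 * c₂ 1 * P = 0 := by rw [h] at hsym; linear_combination hsym
      rcases mul_eq_zero.mp h' with h'' | h''
      · rcases mul_eq_zero.mp h'' with h3 | h3
        · exact absurd h3 hc10
        · exact h3
      · exact absurd h'' hP0
    · refine ⟨?_, h⟩
      have h' : c₁ 1 * c₂ 0 * P = 0 := by rw [h] at hsym; linear_combination hsym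
      rcases mul_eq_zero.mp h' with h'' | h''
      · rcases mul_eq_zero.mp h'' with h3 | h3
        · exact h3
        · exact absurd h3 hc20
      · exact absurd h'' hP0
  rw [hcc.1, hcc.2] at h001
  norm_num at h001

/-- Dual pair of functionals for a linearly independent pair of vectors. -/
lemma exists_dual_pair {p : ℕ} {w v : Fin p → ℝ} (h : LinearIndependent ℝ ![w, v]) :
    ∃ f g : Fin p → ℝ, (∑ i, f i * w i) = 1 ∧ (∑ i, f i * v i) = 0 ∧
      (∑ i, g i * w i) = 0 ∧ (∑ i, g i * v i) = 1 := by
  have hminor : ∃ i j, w i * v j - w j * v i ≠ 0 := by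
    by_contra hc
    push_neg at hc
    by_cases hv : v = 0
    · exact h.ne_zero 1 (by simp [hv])
    · obtain ⟨j, hj⟩ : ∃ j, v j ≠ 0 := by
        by_contra h'; push_neg at h'; exact hv (funext h')
      have hw : (1:ℝ) • w + (-(w j / v j)) • v = 0 := by
        funext i
        have hij := hc i j
        simp only [Pi.add_apply, Pi.smul_apply, smul_eq_mul, Pi.zero_apply, one_mul]
        field_simp
        linear_combination hij
      have := (LinearIndependent.pair_iff.mp h 1 (-(w j / v j)) hw).1
      norm_num at this
  obtain ⟨i, j, hΔ⟩ := hminor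
  set Δ : ℝ := w i * v j - w j * v i with hΔdef
  have key : ∀ (c d : ℝ) (x : Fin p → ℝ),
      (∑ k, (((if k = i then c else 0) + (if k = j then d else 0)) / Δ) * x k)
        = (c * x i + d * x j) / Δ := by
    intro c d x
    simp only [div_mul_eq_mul_div]
    rw [← Finset.sum_div]
    congr 1
    simp only [add_mul, ite_mul, zero_mul, Finset.sum_add_distrib]
    rw [Finset.sum_ite_eq' Finset.univ i (fun k => c * x k),
      Finset.sum_ite_eq' Finset.univ j (fun k => d * x k)]
    simp
  refine ⟨fun k => ((if k = i then v j else 0) + (if k = j then -(v i) else 0)) / Δ,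
    fun k => ((if k = i then -(w j) else 0) + (if k = j then w i else 0)) / Δ, ?_, ?_, ?_, ?_⟩
  · rw [key, div_eq_one_iff_eq hΔ]; ring
  · rw [key]; apply div_eq_zero_iff.mpr; left; ring
  · rw [key]; apply div_eq_zero_iff.mpr; left; ring
  · rw [key, div_eq_one_iff_eq hΔ]; ring

/-- Contraction of a tensor by three covectors. -/
def contr3 {p₁ p₂ p₃ : ℕ} (f : Fin p₁ → ℝ) (g : Fin p₂ → ℝ) (h : Fin p₃ → ℝ)
    (A : Fin p₁ × Fin p₂ × Fin p₃ → ℝ) : ℝ :=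
  ∑ i, ∑ j, ∑ k, f i * g j * h k * A (i, j, k)

lemma contr3_outer3 {p₁ p₂ p₃ : ℕ} (f : Fin p₁ → ℝ) (g : Fin p₂ → ℝ) (h : Fin p₃ → ℝ)
    (u : Fin p₁ → ℝ) (v : Fin p₂ → ℝ) (w : Fin p₃ → ℝ) :
    contr3 f g h (outer3 u v w) = (∑ i, f i * u i) * (∑ j, g j * v j) * (∑ k, h k * w k) := by
  unfold contr3 outer3
  rw [Finset.sum_mul_sum, Finset.sum_mul]
  apply Finset.sum_congr rfl; intro i _
  rw [Finset.sum_mul]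
  apply Finset.sum_congr rfl; intro j _
  rw [Finset.mul_sum]
  apply Finset.sum_congr rfl; intro k _
  ring

lemma contr3_add {p₁ p₂ p₃ : ℕ} (f : Fin p₁ → ℝ) (g : Fin p₂ → ℝ) (h : Fin p₃ → ℝ)
    (A B : Fin p₁ × Fin p₂ × Fin p₃ → ℝ) :
    contr3 f g h (A + B) = contr3 f g h A + contr3 f g h B := by
  unfold contr3
  simp [mul_add, Finset.sum_add_distrib]

lemma contr3_sum {p₁ p₂ p₃ R : ℕ} (f : Fin p₁ → ℝ) (g : Fin p₂ → ℝ) (h : Fin p₃ → ℝ)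
    (T : Fin R → Fin p₁ × Fin p₂ × Fin p₃ → ℝ) :
    contr3 f g h (fun i => ∑ r, T r i) = ∑ r, contr3 f g h (T r) := by
  unfold contr3
  simp only [Finset.mul_sum]
  trans ∑ i, ∑ j, ∑ r, ∑ k, f i * g j * h k * T r (i, j, k)
  · exact Finset.sum_congr rfl fun i _ => Finset.sum_congr rfl fun j _ => Finset.sum_comm
  trans ∑ i, ∑ r, ∑ j, ∑ k, f i * g j * h k * T r (i, j, k)
  · exact Finset.sum_congr rfl fun i _ => Finset.sum_comm
  exact Finset.sum_comm

/-- Every tensor has some decomposition. -/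
lemma rank3_set_nonempty {p₁ p₂ p₃ : ℕ} (A : Fin p₁ × Fin p₂ × Fin p₃ → ℝ) :
    {R : ℕ | ∃ (a : Fin R → Fin p₁ → ℝ) (b : Fin R → Fin p₂ → ℝ) (c : Fin R → Fin p₃ → ℝ),
      A = fun i => ∑ r, a r i.1 * b r i.2.1 * c r i.2.2}.Nonempty := by
  classical
  obtain e := (Fintype.equivFin (Fin p₁ × Fin p₂ × Fin p₃)).symm
  refine ⟨Fintype.card (Fin p₁ × Fin p₂ × Fin p₃),
    fun r x => if x = (e r).1 then A (e r) else 0,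
    fun r x => if x = (e r).2.1 then 1 else 0,
    fun r x => if x = (e r).2.2 then 1 else 0, ?_⟩
  funext i
  rw [Finset.sum_eq_single (e.symm i)]
  · simp
  · intro r _ hr
    have hne : e r ≠ i := fun hh => hr (by rw [← hh, Equiv.symm_apply_apply])
    by_cases h1 : i.1 = (e r).1
    · by_cases h2 : i.2.1 = (e r).2.1
      · by_cases h3 : i.2.2 = (e r).2.2
        · exact absurd (Prod.ext h1.symm (Prod.ext h2.symm h3.symm)) hne
        · simp [h3]
      · simp [h2]
    · simp [h1]
  · intro hi; exact absurd (Finset.mem_univ _) hi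

lemma exists_decomp_of_rank3_le_two {p₁ p₂ p₃ : ℕ} (A : Fin p₁ × Fin p₂ × Fin p₃ → ℝ)
    (h : rank3 A ≤ 2) :
    ∃ (a : Fin 2 → Fin p₁ → ℝ) (b : Fin 2 → Fin p₂ → ℝ) (c : Fin 2 → Fin p₃ → ℝ),
      A = fun i => ∑ r, a r i.1 * b r i.2.1 * c r i.2.2 := by
  classical
  have hmem : ∃ (a : Fin (rank3 A) → Fin p₁ → ℝ) (b : Fin (rank3 A) → Fin p₂ → ℝ)
      (c : Fin (rank3 A) → Fin p₃ → ℝ),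
      A = fun i => ∑ r, a r i.1 * b r i.2.1 * c r i.2.2 :=
    Nat.sInf_mem (rank3_set_nonempty A)
  obtain ⟨a, b, c, hdec⟩ := hmem
  refine ⟨fun r => if h' : (r : ℕ) < rank3 A then a ⟨r, h'⟩ else 0,
    fun r => if h' : (r : ℕ) < rank3 A then b ⟨r, h'⟩ else 0,
    fun r => if h' : (r : ℕ) < rank3 A then c ⟨r, h'⟩ else 0, ?_⟩
  funext i
  have hterm : ∀ r : Fin 2, (if h' : (r : ℕ) < rank3 A then a ⟨r, h'⟩ else 0) i.1 *
      (if h' : (r : ℕ) < rank3 A then b ⟨r, h'⟩ else 0) i.2.1 *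
      (if h' : (r : ℕ) < rank3 A then c ⟨r, h'⟩ else 0) i.2.2
      = (fun m : ℕ => if h' : m < rank3 A then a ⟨m, h'⟩ i.1 * b ⟨m, h'⟩ i.2.1 * c ⟨m, h'⟩ i.2.2
          else 0) (r : ℕ) := by
    intro r
    by_cases h' : (r : ℕ) < rank3 A <;> simp [h']
  have hsum2 : (∑ r : Fin 2, (if h' : (r : ℕ) < rank3 A then a ⟨r, h'⟩ else 0) i.1 *
      (if h' : (r : ℕ) < rank3 A then b ⟨r, h'⟩ else 0) i.2.1 *
      (if h' : (r : ℕ) < rank3 A then c ⟨r, h'⟩ else 0) i.2.2)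
      = ∑ m ∈ Finset.range 2, (fun m : ℕ => if h' : m < rank3 A then
          a ⟨m, h'⟩ i.1 * b ⟨m, h'⟩ i.2.1 * c ⟨m, h'⟩ i.2.2 else 0) m := by
    rw [← Fin.sum_univ_eq_sum_range]
    exact Finset.sum_congr rfl fun r _ => hterm r
  have hsubset : (∑ m ∈ Finset.range 2, (fun m : ℕ => if h' : m < rank3 A then
      a ⟨m, h'⟩ i.1 * b ⟨m, h'⟩ i.2.1 * c ⟨m, h'⟩ i.2.2 else 0) m)
      = ∑ m ∈ Finset.range (rank3 A), (fun m : ℕ => if h' : m < rank3 A then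
          a ⟨m, h'⟩ i.1 * b ⟨m, h'⟩ i.2.1 * c ⟨m, h'⟩ i.2.2 else 0) m := by
    symm
    apply Finset.sum_subset
    · exact Finset.range_subset_range.mpr h
    · intro m _ hm
      rw [Finset.mem_range] at hm
      push_neg at hm
      simp [Nat.not_lt.mpr hm]
  have hback : (∑ m ∈ Finset.range (rank3 A), (fun m : ℕ => if h' : m < rank3 A then
      a ⟨m, h'⟩ i.1 * b ⟨m, h'⟩ i.2.1 * c ⟨m, h'⟩ i.2.2 else 0) m)
      = ∑ r : Fin (rank3 A), a r i.1 * b r i.2.1 * c r i.2.2 := by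
    rw [← Fin.sum_univ_eq_sum_range]
    apply Finset.sum_congr rfl
    intro r _
    simp [r.isLt]
  simp only [hsum2, hsubset, hback]
  exact congrFun hdec i

/-- The degenerate tensor has rank at least 3. -/
lemma rank_G_gt_two {p₁ p₂ p₃ : ℕ} {w₁ v₁ : Fin p₁ → ℝ} {w₂ v₂ : Fin p₂ → ℝ}
    {w₃ v₃ : Fin p₃ → ℝ}
    (h₁ : LinearIndependent ℝ ![w₁, v₁])
    (h₂ : LinearIndependent ℝ ![w₂, v₂])
    (h₃ : LinearIndependent ℝ ![w₃, v₃])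
    (h : rank3 (outer3 v₁ w₂ w₃ + outer3 w₁ v₂ w₃ + outer3 w₁ w₂ v₃) ≤ 2) : False := by
  obtain ⟨a, b, c, hdec⟩ := exists_decomp_of_rank3_le_two _ h
  obtain ⟨f₁, g₁, hf₁w, hf₁v, hg₁w, hg₁v⟩ := exists_dual_pair h₁
  obtain ⟨f₂, g₂, hf₂w, hf₂v, hg₂w, hg₂v⟩ := exists_dual_pair h₂
  obtain ⟨f₃, g₃, hf₃w, hf₃v, hg₃w, hg₃v⟩ := exists_dual_pair h₃
  have hcontr : ∀ (f : Fin p₁ → ℝ) (g : Fin p₂ → ℝ) (h' : Fin p₃ → ℝ),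
      (∑ i, f i * a 0 i) * (∑ j, g j * b 0 j) * (∑ k, h' k * c 0 k)
        + (∑ i, f i * a 1 i) * (∑ j, g j * b 1 j) * (∑ k, h' k * c 1 k)
      = (∑ i, f i * v₁ i) * (∑ j, g j * w₂ j) * (∑ k, h' k * w₃ k)
        + (∑ i, f i * w₁ i) * (∑ j, g j * v₂ j) * (∑ k, h' k * w₃ k)
        + (∑ i, f i * w₁ i) * (∑ j, g j * w₂ j) * (∑ k, h' k * v₃ k) := by
    intro f g h'
    have hL : contr3 f g h' (outer3 v₁ w₂ w₃ + outer3 w₁ v₂ w₃ + outer3 w₁ w₂ v₃)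
        = (∑ i, f i * v₁ i) * (∑ j, g j * w₂ j) * (∑ k, h' k * w₃ k)
          + (∑ i, f i * w₁ i) * (∑ j, g j * v₂ j) * (∑ k, h' k * w₃ k)
          + (∑ i, f i * w₁ i) * (∑ j, g j * w₂ j) * (∑ k, h' k * v₃ k) := by
      rw [contr3_add, contr3_add, contr3_outer3, contr3_outer3, contr3_outer3]
    have hR : contr3 f g h' (outer3 v₁ w₂ w₃ + outer3 w₁ v₂ w₃ + outer3 w₁ w₂ v₃)
        = (∑ i, f i * a 0 i) * (∑ j, g j * b 0 j) * (∑ k, h' k * c 0 k)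
          + (∑ i, f i * a 1 i) * (∑ j, g j * b 1 j) * (∑ k, h' k * c 1 k) := by
      rw [hdec, contr3_sum, Fin.sum_univ_two]
      rw [show (fun i => a 0 i.1 * b 0 i.2.1 * c 0 i.2.2) = outer3 (a 0) (b 0) (c 0) from rfl,
        show (fun i => a 1 i.1 * b 1 i.2.1 * c 1 i.2.2) = outer3 (a 1) (b 1) (c 1) from rfl,
        contr3_outer3, contr3_outer3]
    rw [← hR, hL]
  apply core222
    ![∑ i, f₁ i * a 0 i, ∑ i, g₁ i * a 0 i] ![∑ i, f₁ i * a 1 i, ∑ i, g₁ i * a 1 i]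
    ![∑ j, f₂ j * b 0 j, ∑ j, g₂ j * b 0 j] ![∑ j, f₂ j * b 1 j, ∑ j, g₂ j * b 1 j]
    ![∑ k, f₃ k * c 0 k, ∑ k, g₃ k * c 0 k] ![∑ k, f₃ k * c 1 k, ∑ k, g₃ k * c 1 k]
  all_goals simp only [Matrix.cons_val_zero, Matrix.cons_val_one, Matrix.head_cons]
  · have := hcontr f₁ f₂ f₃; rw [hf₁v, hf₁w, hf₂w, hf₂v, hf₃w, hf₃v] at this; linarith
  · have := hcontr g₁ f₂ f₃; rw [hg₁v, hg₁w, hf₂w, hf₂v, hf₃w, hf₃v] at this; linarith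
  · have := hcontr f₁ g₂ f₃; rw [hf₁v, hf₁w, hg₂w, hg₂v, hf₃w, hf₃v] at this; linarith
  · have := hcontr f₁ f₂ g₃; rw [hf₁v, hf₁w, hf₂w, hf₂v, hg₃w, hg₃v] at this; linarith
  · have := hcontr g₁ g₂ f₃; rw [hg₁v, hg₁w, hg₂w, hg₂v, hf₃w, hf₃v] at this; linarith
  · have := hcontr g₁ f₂ g₃; rw [hg₁v, hg₁w, hf₂w, hf₂v, hg₃w, hg₃v] at this; linarith
  · have := hcontr f₁ g₂ g₃; rw [hf₁v, hf₁w, hg₂w, hg₂v, hg₃w, hg₃v] at this; linarith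
  · have := hcontr g₁ g₂ g₃; rw [hg₁v, hg₁w, hg₂w, hg₂v, hg₃w, hg₃v] at this; linarith

/-- with a full-column-rank design `Z` and responses `y = Z vec(G_b)` for the
degenerate tensor `G_b = v₁∘w₂∘w₃ + w₁∘v₂∘w₃ + w₁∘w₂∘v₃` (each pair `(w_d, v_d)` linearly
independent), the rank-2-constrained least-squares problem has no solution. -/
theorem stmt2 {n p₁ p₂ p₃ : ℕ}
    (Z : Matrix (Fin n) (Fin p₁ × Fin p₂ × Fin p₃) ℝ)
    -- full column rank: the columns of Z are linearly independent
    (hZ : LinearIndependent ℝ (fun j : Fin p₁ × Fin p₂ × Fin p₃ => fun i : Fin n => Z i j))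
    (w₁ v₁ : Fin p₁ → ℝ) (w₂ v₂ : Fin p₂ → ℝ) (w₃ v₃ : Fin p₃ → ℝ)
    (h₁ : LinearIndependent ℝ ![w₁, v₁])
    (h₂ : LinearIndependent ℝ ![w₂, v₂])
    (h₃ : LinearIndependent ℝ ![w₃, v₃])
    (y : Fin n → ℝ)
    (hy : y = Z.mulVec (outer3 v₁ w₂ w₃ + outer3 w₁ v₂ w₃ + outer3 w₁ w₂ v₃)) :
    ¬ ∃ A : Fin p₁ × Fin p₂ × Fin p₃ → ℝ, rank3 A ≤ 2 ∧
      ∀ B : Fin p₁ × Fin p₂ × Fin p₃ → ℝ, rank3 B ≤ 2 →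
        (∑ i, (y i - Z.mulVec A i) ^ 2) ≤ (∑ i, (y i - Z.mulVec B i) ^ 2) := by
  rintro ⟨A, hA, hopt⟩
  set G : Fin p₁ × Fin p₂ × Fin p₃ → ℝ :=
    outer3 v₁ w₂ w₃ + outer3 w₁ v₂ w₃ + outer3 w₁ w₂ v₃ with hG
  set E : Fin p₁ × Fin p₂ × Fin p₃ → ℝ :=
    outer3 v₁ v₂ w₃ + outer3 v₁ w₂ v₃ + outer3 w₁ v₂ v₃ with hE
  set V : Fin p₁ × Fin p₂ × Fin p₃ → ℝ := outer3 v₁ v₂ v₃ with hV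
  have hrankB : ∀ t : ℝ, t ≠ 0 → rank3 (G + t • E + (t ^ 2) • V) ≤ 2 := by
    intro t ht
    apply Nat.sInf_le
    refine ⟨![fun i => t⁻¹ * (w₁ i + t * v₁ i), fun i => -(t⁻¹) * w₁ i],
      ![fun j => w₂ j + t * v₂ j, w₂], ![fun k => w₃ k + t * v₃ k, w₃], ?_⟩
    funext i
    simp only [hG, hE, hV, Pi.add_apply, Pi.smul_apply, smul_eq_mul, Fin.sum_univ_two,
      Matrix.cons_val_zero, Matrix.cons_val_one, Matrix.head_cons, outer3]
    field_simp
    ring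
  have hBval : ∀ t : ℝ, ∀ i, y i - Z.mulVec (G + t • E + (t ^ 2) • V) i
      = -(t * Z.mulVec E i + t ^ 2 * Z.mulVec V i) := by
    intro t i
    have hsplit : Z.mulVec (G + t • E + (t ^ 2) • V)
        = Z.mulVec G + t • Z.mulVec E + (t ^ 2) • Z.mulVec V := by
      rw [Matrix.mulVec_add, Matrix.mulVec_add, Matrix.mulVec_smul, Matrix.mulVec_smul]
    rw [hy, hsplit]
    simp only [Pi.add_apply, Pi.smul_apply, smul_eq_mul]
    ring
  have key : ∀ t : ℝ, t ≠ 0 → (∑ i, (y i - Z.mulVec A i) ^ 2)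
      ≤ ∑ i, (t * Z.mulVec E i + t ^ 2 * Z.mulVec V i) ^ 2 := by
    intro t ht
    have h1 := hopt _ (hrankB t ht)
    have h2 : (∑ i, (y i - Z.mulVec (G + t • E + (t ^ 2) • V) i) ^ 2)
        = ∑ i, (t * Z.mulVec E i + t ^ 2 * Z.mulVec V i) ^ 2 := by
      apply Finset.sum_congr rfl
      intro i _
      rw [hBval t i]
      ring
    rw [h2] at h1
    exact h1
  have hcont : Continuous (fun t : ℝ => ∑ i, (t * Z.mulVec E i + t ^ 2 * Z.mulVec V i) ^ 2) := by
    apply continuous_finset_sum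
    intro i _
    fun_prop
  have htend : Filter.Tendsto (fun t : ℝ => ∑ i, (t * Z.mulVec E i + t ^ 2 * Z.mulVec V i) ^ 2)
      (nhdsWithin 0 {(0:ℝ)}ᶜ) (nhds 0) := by
    have h0 : Filter.Tendsto (fun t : ℝ => ∑ i, (t * Z.mulVec E i + t ^ 2 * Z.mulVec V i) ^ 2)
        (nhds 0) (nhds 0) := by
      have := hcont.tendsto 0
      simpa using this
    exact h0.mono_left nhdsWithin_le_nhds
  have hle : (∑ i, (y i - Z.mulVec A i) ^ 2) ≤ 0 := by
    refine ge_of_tendsto htend ?_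
    filter_upwards [self_mem_nhdsWithin] with t ht
    exact key t ht
  have hzero : ∀ i, y i - Z.mulVec A i = 0 := by
    have hnn : ∀ j ∈ Finset.univ, (0:ℝ) ≤ (y j - Z.mulVec A j) ^ 2 := fun j _ => sq_nonneg _
    have hsum0 : (∑ i, (y i - Z.mulVec A i) ^ 2) = 0 :=
      le_antisymm hle (Finset.sum_nonneg hnn)
    intro i
    have := (Finset.sum_eq_zero_iff_of_nonneg hnn).mp hsum0 i (Finset.mem_univ i)
    exact pow_eq_zero_iff two_ne_zero |>.mp this
  have hAG : A = G := by
    have hlin := Fintype.linearIndependent_iff.mp hZ (fun j => A j - G j)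
    have hz : (∑ j, (A j - G j) • (fun i : Fin n => Z i j)) = 0 := by
      funext i'
      simp only [Finset.sum_apply, Pi.smul_apply, smul_eq_mul, Pi.zero_apply]
      have h1 : Z.mulVec A i' = y i' := by have := hzero i'; linarith
      have h2 : Z.mulVec G i' = y i' := by rw [hy]
      have hm : ∀ x : Fin p₁ × Fin p₂ × Fin p₃ → ℝ, Z.mulVec x i' = ∑ j, Z i' j * x j :=
        fun x => rfl
      rw [hm] at h1 h2
      calc (∑ j, (A j - G j) * Z i' j) = (∑ j, Z i' j * A j) - ∑ j, Z i' j * G j := by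
            rw [← Finset.sum_sub_distrib]; exact Finset.sum_congr rfl fun j _ => by ring
        _ = 0 := by rw [h1, h2]; ring
    have hco := hlin hz
    funext j
    have := hco j
    linarith
  rw [hAG] at hA
  exact rank_G_gt_two h₁ h₂ h₃ hA
end
end

section
/- Let D = 3 and fix p̃_d < p_d for d = 1,2,3 with s = p̃₁p̃₂p̃₃. Collect the columns of Z ∈ ℝ^{n×p₁p₂p₃} that correspond to tensor entries with positions (i₁,i₂,i₃), i_d ∈ {1,…,p̃_d}, into Z₁ ∈ ℝ^{n×s}, and the remaining columns into Z₂ ∈ ℝ^{n×(p₁p₂p₃−s)}. Suppose Z₁ᵀZ₁ = I_s and Z₁ᵀZ₂ = 0, and that y = Z₁ vec(G̃_b) for G̃_b = ṽ₁ ∘ w̃₂ ∘ w̃₃ + w̃₁ ∘ ṽ₂ ∘ w̃₃ + w̃₁ ∘ w̃₂ ∘ ṽ₃ ∈ ℝ^{p̃₁×p̃₂×p̃₃}, where w̃_d, ṽ_d ∈ ℝ^{p̃_d} is a linearly independent pair for each d = 1,2,3. Then the rank-constrained least-squares problem inf{F(A) : rank(A) ≤ 2} does not attain its infimum (it has no solution).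 -/
/-
The loss of `B` is `‖Z (G - B)‖²`, where `G` is `G̃_b` extended by zero, and since the block
columns `Z₁` are orthonormal and orthogonal to `Z₂`, `Z₁ᵀ Z x` reads off the block entries of `x`.
`G̃_b` is the limit as `ε → 0` of the rank-two tensors
`ε⁻¹ ((w₁ + ε v₁) ∘ (w₂ + ε v₂) ∘ (w₃ + ε v₃) - w₁ ∘ w₂ ∘ w₃)`, so a minimiser would have loss
`0`, hence agree with `G̃_b` on the block and restrict to a rank-two decomposition of `G̃_b`.
But contracting the third mode of `G̃_b` against functionals dual to `(w̃₃, ṽ₃)` gives the slices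
`ṽ₁ w̃₂ᵀ + w̃₁ ṽ₂ᵀ` and `w̃₁ w̃₂ᵀ`; in a rank-two decomposition some combination
`ṽ₁ w̃₂ᵀ + w̃₁ (ṽ₂ - σ w̃₂)ᵀ` of them would have rank one, which linear independence forbids.
-/

open scoped BigOperators
open Matrix

noncomputable section

/-- The embedding of the "first block" index set `{1,…,q_d} ⊆ {1,…,p_d}` (d = 1,2,3). -/
def emb3 {q₁ q₂ q₃ p₁ p₂ p₃ : ℕ} (h₁ : q₁ ≤ p₁) (h₂ : q₂ ≤ p₂) (h₃ : q₃ ≤ p₃) :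
    Fin q₁ × Fin q₂ × Fin q₃ → Fin p₁ × Fin p₂ × Fin p₃ :=
  fun j => (Fin.castLE h₁ j.1, Fin.castLE h₂ j.2.1, Fin.castLE h₃ j.2.2)

open Function

section Dual

variable {K V : Type*} [Field K] [AddCommGroup V] [Module K V]

theorem LinearIndependent.exists_dual_eq_one_eq_zero {u v : V} (h : LinearIndependent K ![u, v]) :
    ∃ φ : Module.Dual K V, φ u = 1 ∧ φ v = 0 := by
  obtain ⟨g, hg⟩ := (Fintype.linearCombination K ![u, v]).exists_leftInverse_of_injective
    (LinearMap.ker_eq_bot.2 (linearIndependent_iff_injective_fintypeLinearCombination.1 h))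
  have hcomb : ∀ r : Fin 2, g (![u, v] r) = Pi.single r 1 := fun r => by
    simpa using LinearMap.congr_fun hg (Pi.single r 1)
  refine ⟨(LinearMap.proj 0).comp g, ?_, ?_⟩
  · simpa using congrFun (hcomb 0) 0
  · simpa using congrFun (hcomb 1) 0

end Dual

namespace Matrix

variable {K m n : Type*} [Field K]

theorem vecMulVec_add_vecMulVec_ne_vecMulVec {x₁ x₂ : m → K} {y₁ y₂ : n → K}
    (hx : LinearIndependent K ![x₁, x₂]) (hy : LinearIndependent K ![y₁, y₂]) (s : m → K)
    (t : n → K) : vecMulVec x₁ y₁ + vecMulVec x₂ y₂ ≠ vecMulVec s t := by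
  intro h
  have hrow : ∀ χ : Module.Dual K (n → K), χ y₁ • x₁ + χ y₂ • x₂ = χ t • s := fun χ => by
    ext i
    have hi : x₁ i • y₁ + x₂ i • y₂ = s i • t := by
      ext j; simpa [vecMulVec_apply] using congrFun (congrFun h i) j
    simpa [mul_comm] using congrArg χ hi
  obtain ⟨φ, hφ₁, hφ₂⟩ := hy.exists_dual_eq_one_eq_zero
  obtain ⟨ψ, hψ₂, hψ₁⟩ := (LinearIndependent.pair_symm_iff.1 hy).exists_dual_eq_one_eq_zero
  have hx₁ : x₁ = φ t • s := by simpa [hφ₁, hφ₂] using hrow φ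
  have hx₂ : x₂ = ψ t • s := by simpa [hψ₁, hψ₂] using hrow ψ
  obtain ⟨-, hφt⟩ := LinearIndependent.pair_iff.1 hx (ψ t) (-φ t) (by
    rw [hx₁, hx₂, smul_smul, smul_smul, neg_mul, mul_comm, neg_smul, add_neg_cancel])
  exact hx.ne_zero 0 (by simp [hx₁, neg_eq_zero.1 hφt])

end Matrix

section Rank

variable {p₁ p₂ p₃ : ℕ}

def IsSumOuter3 (R : ℕ) (A : Fin p₁ × Fin p₂ × Fin p₃ → ℝ) : Prop :=
  ∃ (a : Fin R → Fin p₁ → ℝ) (b : Fin R → Fin p₂ → ℝ) (c : Fin R → Fin p₃ → ℝ),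
    A = ∑ r, outer3 (a r) (b r) (c r)

theorem rank3_eq_sInf (A : Fin p₁ × Fin p₂ × Fin p₃ → ℝ) :
    rank3 A = sInf {R | IsSumOuter3 R A} := by
  simp only [rank3, IsSumOuter3, Finset.sum_fn]
  rfl

theorem IsSumOuter3.succ {R : ℕ} {A : Fin p₁ × Fin p₂ × Fin p₃ → ℝ} (h : IsSumOuter3 R A) :
    IsSumOuter3 (R + 1) A := by
  obtain ⟨a, b, c, rfl⟩ := h
  refine ⟨Fin.cons 0 a, Fin.cons 0 b, Fin.cons 0 c, ?_⟩
  ext i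
  simp [outer3, Fin.sum_univ_succ, Finset.sum_apply]

theorem exists_isSumOuter3 (A : Fin p₁ × Fin p₂ × Fin p₃ → ℝ) : ∃ R, IsSumOuter3 R A := by
  let e := (Fintype.equivFin (Fin p₁ × Fin p₂ × Fin p₃)).symm
  refine ⟨_, fun r => Pi.single (e r).1 (A (e r)), fun r => Pi.single (e r).2.1 1,
    fun r => Pi.single (e r).2.2 1, ?_⟩
  rw [e.sum_comp (fun k => outer3 (Pi.single k.1 (A k)) (Pi.single k.2.1 1) (Pi.single k.2.2 1))]
  ext i
  rw [Finset.sum_apply, Fintype.sum_eq_single i]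
  · simp [outer3]
  · intro k hk
    simp only [outer3, Pi.single_apply]
    split_ifs <;> simp_all [Prod.ext_iff]

theorem rank3_le_iff_isSumOuter3 {R : ℕ} {A : Fin p₁ × Fin p₂ × Fin p₃ → ℝ} :
    rank3 A ≤ R ↔ IsSumOuter3 R A := by
  rw [rank3_eq_sInf]
  refine ⟨fun h => Nat.le_induction (Nat.sInf_mem (exists_isSumOuter3 A)) (fun _ _ => .succ) R h,
    fun h => Nat.sInf_le h⟩

theorem isSumOuter3_outer3_add_outer3 (a a' : Fin p₁ → ℝ) (b b' : Fin p₂ → ℝ)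
    (c c' : Fin p₃ → ℝ) : IsSumOuter3 2 (outer3 a b c + outer3 a' b' c') :=
  ⟨![a, a'], ![b, b'], ![c, c'], by simp [Fin.sum_univ_two]⟩

theorem IsSumOuter3.comp_emb3 {q₁ q₂ q₃ R : ℕ} {A : Fin p₁ × Fin p₂ × Fin p₃ → ℝ}
    (h : IsSumOuter3 R A) (h₁ : q₁ ≤ p₁) (h₂ : q₂ ≤ p₂) (h₃ : q₃ ≤ p₃) :
    IsSumOuter3 R (A ∘ emb3 h₁ h₂ h₃) := by
  obtain ⟨a, b, c, rfl⟩ := h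
  refine ⟨fun r => a r ∘ Fin.castLE h₁, fun r => b r ∘ Fin.castLE h₂,
    fun r => c r ∘ Fin.castLE h₃, ?_⟩
  ext j
  simp [Finset.sum_apply, emb3, outer3]

end Rank

section Contraction

variable {p₁ p₂ p₃ : ℕ}

def contract3 (φ : Module.Dual ℝ (Fin p₃ → ℝ)) (T : Fin p₁ × Fin p₂ × Fin p₃ → ℝ) :
    Matrix (Fin p₁) (Fin p₂) ℝ :=
  Matrix.of fun i₁ i₂ => φ fun i₃ => T (i₁, i₂, i₃)

theorem contract3_add (φ : Module.Dual ℝ (Fin p₃ → ℝ)) (S T : Fin p₁ × Fin p₂ × Fin p₃ → ℝ) :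
    contract3 φ (S + T) = contract3 φ S + contract3 φ T := by
  ext i₁ i₂
  exact map_add φ (fun i₃ => S (i₁, i₂, i₃)) (fun i₃ => T (i₁, i₂, i₃))

theorem contract3_outer3 (φ : Module.Dual ℝ (Fin p₃ → ℝ)) (a : Fin p₁ → ℝ) (b : Fin p₂ → ℝ)
    (c : Fin p₃ → ℝ) : contract3 φ (outer3 a b c) = φ c • vecMulVec a b := by
  ext i₁ i₂
  have : (fun i₃ => outer3 a b c (i₁, i₂, i₃)) = (a i₁ * b i₂) • c := by
    ext i₃; simp [outer3]
  simp [contract3, this, vecMulVec_apply, mul_comm]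

theorem not_isSumOuter3_two {w₁ v₁ : Fin p₁ → ℝ} {w₂ v₂ : Fin p₂ → ℝ} {w₃ v₃ : Fin p₃ → ℝ}
    (h₁ : LinearIndependent ℝ ![w₁, v₁]) (h₂ : LinearIndependent ℝ ![w₂, v₂])
    (h₃ : LinearIndependent ℝ ![w₃, v₃]) :
    ¬ IsSumOuter3 2 (outer3 v₁ w₂ w₃ + outer3 w₁ v₂ w₃ + outer3 w₁ w₂ v₃) := by
  rintro ⟨a, b, c, hT⟩
  obtain ⟨φ, hφw, hφv⟩ := h₃.exists_dual_eq_one_eq_zero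
  obtain ⟨ψ, hψv, hψw⟩ := (LinearIndependent.pair_symm_iff.1 h₃).exists_dual_eq_one_eq_zero
  have hP := congrArg (contract3 φ) hT
  have hN := congrArg (contract3 ψ) hT
  simp only [Fin.sum_univ_two, contract3_add, contract3_outer3, hφw, hφv, hψw, hψv, one_smul,
    zero_smul, add_zero, zero_add] at hP hN
  have hrank_one : ∀ (σ t : ℝ) (r : Fin 2),
      vecMulVec v₁ w₂ + vecMulVec w₁ v₂ - σ • vecMulVec w₁ w₂
        ≠ t • vecMulVec (a r) (b r) := by
    intro σ t r h
    have hv₁w₁ : LinearIndependent ℝ ![v₁, w₁] := LinearIndependent.pair_symm_iff.1 h₁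
    have hw₂ : LinearIndependent ℝ ![w₂, (-σ) • w₂ + v₂] :=
      (LinearIndependent.pair_add_smul_right_iff (-σ)).2 h₂
    refine vecMulVec_add_vecMulVec_ne_vecMulVec hv₁w₁ hw₂ (t • a r) (b r) ?_
    rw [smul_vecMulVec, ← h, vecMulVec_add, vecMulVec_smul, neg_smul]
    abel
  by_cases h0 : ψ (c 0) = 0
  · have h1 : ψ (c 1) ≠ 0 := by
      intro h1
      rw [h0, h1, zero_smul, zero_smul, add_zero] at hN
      obtain ⟨i₁, hi₁⟩ := Function.ne_iff.1 (h₁.ne_zero 0)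
      obtain ⟨i₂, hi₂⟩ := Function.ne_iff.1 (h₂.ne_zero 0)
      exact mul_ne_zero hi₁ hi₂ congr($hN i₁ i₂)
    refine hrank_one (φ (c 1) / ψ (c 1)) (φ (c 0)) 0 ?_
    rw [hP, hN, h0, smul_add, smul_smul, smul_smul, div_mul_cancel₀ _ h1]
    simp
  · refine hrank_one (φ (c 0) / ψ (c 0)) (φ (c 1) - φ (c 0) / ψ (c 0) * ψ (c 1)) 1 ?_
    rw [hP, hN, smul_add, smul_smul, smul_smul, div_mul_cancel₀ _ h0, sub_smul]
    abel

end Contraction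

open Filter Topology in
theorem outer3_add_outer3_add_outer3_mem_closure_rank3_le_two {p₁ p₂ p₃ : ℕ} (u₁ v₁ : Fin p₁ → ℝ)
    (u₂ v₂ : Fin p₂ → ℝ) (u₃ v₃ : Fin p₃ → ℝ) :
    outer3 v₁ u₂ u₃ + outer3 u₁ v₂ u₃ + outer3 u₁ u₂ v₃ ∈ closure {B | rank3 B ≤ 2} := by
  set T := outer3 v₁ u₂ u₃ + outer3 u₁ v₂ u₃ + outer3 u₁ u₂ v₃
  set D := outer3 u₁ v₂ v₃ + outer3 v₁ u₂ v₃ + outer3 v₁ v₂ u₃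
  have hexpand : ∀ ε : ℝ, ε ≠ 0 →
      outer3 (ε⁻¹ • (u₁ + ε • v₁)) (u₂ + ε • v₂) (u₃ + ε • v₃) + outer3 (-ε⁻¹ • u₁) u₂ u₃
        = T + ε • D + ε ^ 2 • outer3 v₁ v₂ v₃ := fun ε hε => by
    ext i
    simp only [T, D, outer3, Pi.add_apply, Pi.smul_apply, smul_eq_mul]
    field_simp
    ring
  have hlim : Tendsto (fun ε : ℝ => T + ε • D + ε ^ 2 • outer3 v₁ v₂ v₃) (𝓝[≠] 0) (𝓝 T) := by
    have hcont : Continuous fun ε : ℝ => T + ε • D + ε ^ 2 • outer3 v₁ v₂ v₃ := by fun_prop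
    simpa using (hcont.tendsto 0).mono_left nhdsWithin_le_nhds
  refine mem_closure_of_tendsto hlim (eventually_nhdsWithin_of_forall fun ε hε => ?_)
  rw [← hexpand ε hε]
  exact rank3_le_iff_isSumOuter3.2 (isSumOuter3_outer3_add_outer3 _ _ _ _ _ _)

section Extend

theorem emb3_injective {q₁ q₂ q₃ p₁ p₂ p₃ : ℕ} (h₁ : q₁ ≤ p₁) (h₂ : q₂ ≤ p₂) (h₃ : q₃ ≤ p₃) :
    Injective (emb3 h₁ h₂ h₃) :=
  (Fin.castLE_injective h₁).prodMap ((Fin.castLE_injective h₂).prodMap (Fin.castLE_injective h₃))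

theorem outer3_extend_castLE {q₁ q₂ q₃ p₁ p₂ p₃ : ℕ} (h₁ : q₁ ≤ p₁) (h₂ : q₂ ≤ p₂)
    (h₃ : q₃ ≤ p₃) (u : Fin q₁ → ℝ) (v : Fin q₂ → ℝ) (w : Fin q₃ → ℝ) :
    outer3 (extend (Fin.castLE h₁) u 0) (extend (Fin.castLE h₂) v 0) (extend (Fin.castLE h₃) w 0)
      = extend (emb3 h₁ h₂ h₃) (outer3 u v w) 0 := by
  ext k
  by_cases hk : k ∈ Set.range (emb3 h₁ h₂ h₃)
  · obtain ⟨j, rfl⟩ := hk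
    rw [(emb3_injective h₁ h₂ h₃).extend_apply]
    simp [outer3, emb3, (Fin.castLE_injective _).extend_apply]
  · have hk' : k.1 ∉ Set.range (Fin.castLE h₁) ∨ k.2.1 ∉ Set.range (Fin.castLE h₂) ∨
        k.2.2 ∉ Set.range (Fin.castLE h₃) := by
      by_contra! h
      obtain ⟨⟨i₁, hi₁⟩, ⟨i₂, hi₂⟩, ⟨i₃, hi₃⟩⟩ := h
      exact hk ⟨(i₁, i₂, i₃), by simp [emb3, hi₁, hi₂, hi₃]⟩
    rw [extend_apply' _ _ _ (by simpa using hk)]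
    rcases hk' with h | h | h <;> simp [outer3, extend_apply' _ _ _ h]

variable {R m ι κ : Type*} [Semiring R] [Fintype ι] [Fintype κ] {E : ι → κ}

theorem mulVec_extend_zero (hE : Injective E) (Z : Matrix m κ R) (g : ι → R) (i : m) :
    (Z *ᵥ extend E g 0) i = ∑ j, Z i (E j) * g j :=
  (Fintype.sum_of_injective E hE _ _ (fun k hk => by simp [extend_apply' _ _ _ (by simpa using hk)])
    (fun j => by rw [hE.extend_apply])).symm

theorem sum_mul_mulVec_eq_of_orthonormal [Fintype m] [DecidableEq ι] (hE : Injective E)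
    {Z : Matrix m κ R}
    (horth : ∀ j j', ∑ i, Z i (E j) * Z i (E j') = if j = j' then 1 else 0)
    (hperp : ∀ j k, k ∉ Set.range E → ∑ i, Z i (E j) * Z i k = 0) (x : κ → R) (j : ι) :
    ∑ i, Z i (E j) * (Z *ᵥ x) i = x (E j) := by
  classical
  have hcol : ∀ k, ∑ i, Z i (E j) * Z i k = if E j = k then 1 else 0 := fun k => by
    by_cases hk : k ∈ Set.range E
    · obtain ⟨j', rfl⟩ := hk
      simp [horth, hE.eq_iff]
    · rw [hperp j k hk, if_neg]
      rintro rfl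
      exact hk ⟨j, rfl⟩
  calc ∑ i, Z i (E j) * (Z *ᵥ x) i = ∑ k, (∑ i, Z i (E j) * Z i k) * x k := by
        simp only [mulVec, dotProduct, Finset.mul_sum, Finset.sum_mul, mul_assoc]
        exact Finset.sum_comm
    _ = x (E j) := by simp [hcol]

end Extend

/-- if the block `Z₁` of columns of `Z` corresponding to positions
`(i₁,i₂,i₃)`, `i_d ≤ q_d < p_d`, satisfies `Z₁ᵀZ₁ = I` and `Z₁ᵀZ₂ = 0` (`Z₂` the remaining
columns), and `y = Z₁ vec(G̃_b)` for the degenerate tensor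
`G̃_b = ṽ₁∘w̃₂∘w̃₃ + w̃₁∘ṽ₂∘w̃₃ + w̃₁∘w̃₂∘ṽ₃`, then the rank-2-constrained least-squares
problem has no solution. -/
theorem stmt3 {n q₁ q₂ q₃ p₁ p₂ p₃ : ℕ}
    (hq₁ : q₁ < p₁) (hq₂ : q₂ < p₂) (hq₃ : q₃ < p₃)
    (Z : Matrix (Fin n) (Fin p₁ × Fin p₂ × Fin p₃) ℝ)
    -- Z₁ᵀ Z₁ = I_s : the columns of Z at embedded positions are orthonormal
    (horth : ∀ j j' : Fin q₁ × Fin q₂ × Fin q₃,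
      (∑ i, Z i (emb3 hq₁.le hq₂.le hq₃.le j) * Z i (emb3 hq₁.le hq₂.le hq₃.le j'))
        = if j = j' then (1 : ℝ) else 0)
    -- Z₁ᵀ Z₂ = 0 : the embedded columns are orthogonal to all remaining columns
    (hperp : ∀ (j : Fin q₁ × Fin q₂ × Fin q₃) (k : Fin p₁ × Fin p₂ × Fin p₃),
      k ∉ Set.range (emb3 hq₁.le hq₂.le hq₃.le) →
      (∑ i, Z i (emb3 hq₁.le hq₂.le hq₃.le j) * Z i k) = 0)
    (w₁ v₁ : Fin q₁ → ℝ) (w₂ v₂ : Fin q₂ → ℝ) (w₃ v₃ : Fin q₃ → ℝ)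
    (h₁ : LinearIndependent ℝ ![w₁, v₁])
    (h₂ : LinearIndependent ℝ ![w₂, v₂])
    (h₃ : LinearIndependent ℝ ![w₃, v₃])
    (y : Fin n → ℝ)
    -- y = Z₁ vec(G̃_b)
    (hy : ∀ i, y i = ∑ j : Fin q₁ × Fin q₂ × Fin q₃,
      Z i (emb3 hq₁.le hq₂.le hq₃.le j) *
        (outer3 v₁ w₂ w₃ + outer3 w₁ v₂ w₃ + outer3 w₁ w₂ v₃) j) :
    ¬ ∃ A : Fin p₁ × Fin p₂ × Fin p₃ → ℝ, rank3 A ≤ 2 ∧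
      ∀ B : Fin p₁ × Fin p₂ × Fin p₃ → ℝ, rank3 B ≤ 2 →
        (∑ i, (y i - Z.mulVec A i) ^ 2) ≤ (∑ i, (y i - Z.mulVec B i) ^ 2) := by
  rintro ⟨A, hA, hmin⟩
  set E := emb3 hq₁.le hq₂.le hq₃.le
  set g := outer3 v₁ w₂ w₃ + outer3 w₁ v₂ w₃ + outer3 w₁ w₂ v₃
  have hE : Injective E := emb3_injective _ _ _
  set G := extend E g 0
  have hyG : y = Z *ᵥ G := funext fun i => by rw [hy i, mulVec_extend_zero hE]
  have hG : G ∈ closure {B | rank3 B ≤ 2} := by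
    have := outer3_add_outer3_add_outer3_mem_closure_rank3_le_two (extend (Fin.castLE hq₁.le) w₁ 0)
      (extend (Fin.castLE hq₁.le) v₁ 0) (extend (Fin.castLE hq₂.le) w₂ 0)
      (extend (Fin.castLE hq₂.le) v₂ 0) (extend (Fin.castLE hq₃.le) w₃ 0)
      (extend (Fin.castLE hq₃.le) v₃ 0)
    simpa only [outer3_extend_castLE, ← extend_add, add_zero] using this
  have hloss : ∑ i, (y i - (Z *ᵥ A) i) ^ 2 ≤ 0 := by
    have hclosed : IsClosed {B | ∑ i, (y i - (Z *ᵥ A) i) ^ 2 ≤ ∑ i, (y i - (Z *ᵥ B) i) ^ 2} :=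
      isClosed_le continuous_const (by fun_prop)
    have h : ∑ i, (y i - (Z *ᵥ A) i) ^ 2 ≤ ∑ i, (y i - (Z *ᵥ G) i) ^ 2 :=
      closure_minimal (fun B hB => hmin B hB) hclosed hG
    simpa [← hyG] using h
  have hZA : Z *ᵥ A = y := funext fun i => by
    have := (Finset.sum_eq_zero_iff_of_nonneg (fun i _ => sq_nonneg _)).1
      (le_antisymm hloss (by positivity)) i (Finset.mem_univ i)
    linarith [pow_eq_zero_iff two_ne_zero |>.1 this]
  have hAE : A ∘ E = g := funext fun j => by
    rw [Function.comp_apply, ← sum_mul_mulVec_eq_of_orthonormal hE horth hperp A j, hZA, hyG,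
      sum_mul_mulVec_eq_of_orthonormal hE horth hperp G j]
    exact hE.extend_apply g 0 j
  have hgA := (rank3_le_iff_isSumOuter3.1 hA).comp_emb3 hq₁.le hq₂.le hq₃.le
  rw [hAE] at hgA
  exact not_isSumOuter3_two h₁ h₂ h₃ hgA
end
end

section
/- Let {θ_t}_{t=1,2,…} be a sequence of CP parameters such that f(θ_t) → inf_θ f(θ) as t → ∞. If the infimum inf_θ f(θ) is not attained by any θ, then the magnitude diverges: M(θ_t) → ∞ as t → ∞. -/
open scoped BigOperators
open Filter Matrix

noncomputable section

/-- The squared loss `f(θ) = ∑ᵢ (yᵢ − ⟨∑ᵣ β_{1,r}∘⋯∘β_{D,r}, Xᵢ⟩)²` of a CP parameter. -/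
def floss {D n : ℕ} {p : Fin D → ℕ} (R : ℕ) (y : Fin n → ℝ)
    (X : Fin n → (∀ d : Fin D, Fin (p d)) → ℝ)
    (θ : Fin R → ∀ d : Fin D, Fin (p d) → ℝ) : ℝ :=
  ∑ i, (y i - ∑ j, cpDecomp R θ j * X i j) ^ 2

/-- The magnitude `M(θ) = ∑ᵣ ∏_d ‖β_{d,r}‖` of a CP parameter. -/
def mag {D R : ℕ} {p : Fin D → ℕ} (θ : Fin R → ∀ d : Fin D, Fin (p d) → ℝ) : ℝ :=
  ∑ r : Fin R, ∏ d : Fin D, Real.sqrt (∑ l, θ r d l ^ 2)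

/-!
If the magnitudes `M(θ_t)` did not diverge, infinitely many `θ_t` would have magnitude at most
some `C`. Rescaling the `D` factors of each rank-one term to a common Euclidean norm, the `D`-th
root of their product, leaves the tensor (hence the loss) unchanged and makes every entry at
most `max C 1`. So infinitely many values `f(θ_t)` lie in the image of a compact ball under the
continuous loss; that image is closed, hence contains the limit `inf f`, which is then attained.
-/

open Topology Finset

theorem tendsto_atTop_of_tendsto_iInf_of_not_attained {ι X : Type*} [TopologicalSpace X]
    {f g : X → ℝ} {l : Filter ι} {u : ι → X} (hf : Continuous f)
    (hg : ∀ C, ∃ K, IsCompact K ∧ f '' {x | g x ≤ C} ⊆ f '' K)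
    (hu : Tendsto (f ∘ u) l (𝓝 (⨅ x, f x))) (hna : ¬ ∃ x, f x = ⨅ x, f x) :
    Tendsto (g ∘ u) l atTop := by
  refine tendsto_atTop.2 fun C => ?_
  by_contra hC
  obtain ⟨K, hK, hfK⟩ := hg C
  have hfreq : ∃ᶠ t in l, f (u t) ∈ f '' K :=
    (not_eventually.1 hC).mono fun t ht => hfK ⟨u t, (not_le.1 ht).le, rfl⟩
  obtain ⟨x, -, hx⟩ := (hK.image hf).isClosed.mem_of_frequently_of_tendsto hfreq hu
  exact hna ⟨x, hx⟩

theorem Real.rpow_inv_natCast_le_max_one {x : ℝ} (hx : 0 ≤ x) (n : ℕ) :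
    x ^ (n⁻¹ : ℝ) ≤ max x 1 := by
  rcases le_total x 1 with h | h
  · exact (Real.rpow_le_one hx h (by positivity)).trans (le_max_right x 1)
  · calc x ^ (n⁻¹ : ℝ) ≤ x ^ (1 : ℝ) := Real.rpow_le_rpow_of_exponent_le h (Nat.cast_inv_le_one n)
      _ ≤ max x 1 := by rw [Real.rpow_one]; exact le_max_left x 1

theorem Real.sqrt_sum_sq_eq_norm_toLp {κ : Type*} [Fintype κ] (x : κ → ℝ) :
    √(∑ l, x l ^ 2) = ‖WithLp.toLp 2 x‖ := by
  simp [EuclideanSpace.norm_eq, Real.norm_eq_abs, sq_abs]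

section Balance

variable {ι : Type*} [Fintype ι] {κ : ι → Type*} [∀ i, Fintype (κ i)]

open WithLp

open scoped Classical in
def balance (v : ∀ i, κ i → ℝ) : ∀ i, κ i → ℝ :=
  if ∃ i, v i = 0 then 0
  else fun i => ((∏ j, ‖toLp 2 (v j)‖) ^ ((Fintype.card ι : ℝ)⁻¹) / ‖toLp 2 (v i)‖) • v i

theorem prod_balance_apply (v : ∀ i, κ i → ℝ) (x : ∀ i, κ i) :
    ∏ i, balance v i (x i) = ∏ i, v i (x i) := by
  unfold balance
  split_ifs with h
  · obtain ⟨i, hi⟩ := h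
    rw [prod_eq_zero (mem_univ i) (by simp), prod_eq_zero (mem_univ i) (by simp [hi])]
  · push Not at h
    rcases isEmpty_or_nonempty ι with hι | hι
    · simp [univ_eq_empty]
    have hpos : ∀ i, 0 < ‖toLp 2 (v i)‖ := fun i => norm_pos_iff.2 (by simpa using h i)
    simp only [Pi.smul_apply, smul_eq_mul]
    rw [prod_mul_distrib, prod_div_distrib, prod_const, card_univ,
      Real.rpow_inv_natCast_pow (by positivity) Fintype.card_ne_zero,
      div_self (prod_pos fun i _ => hpos i).ne', one_mul]

theorem abs_balance_apply_le (v : ∀ i, κ i → ℝ) (i : ι) (l : κ i) :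
    |balance v i l| ≤ (∏ j, ‖toLp 2 (v j)‖) ^ ((Fintype.card ι : ℝ)⁻¹) := by
  unfold balance
  split_ifs with h
  · simp only [Pi.zero_apply, abs_zero]
    positivity
  · push Not at h
    have hpos : 0 < ‖toLp 2 (v i)‖ := norm_pos_iff.2 (by simpa using h i)
    have hentry : |v i l| ≤ ‖toLp 2 (v i)‖ := by
      simpa [Real.norm_eq_abs] using PiLp.norm_apply_le (toLp 2 (v i)) l
    simp only [Pi.smul_apply, smul_eq_mul]
    rw [abs_mul, abs_of_nonneg (by positivity)]
    calc _ ≤ _ * ‖toLp 2 (v i)‖ := by gcongr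
      _ = _ := div_mul_cancel₀ _ hpos.ne'

theorem norm_balance_le (v : ∀ i, κ i → ℝ) :
    ‖balance v‖ ≤ max (∏ j, ‖toLp 2 (v j)‖) 1 := by
  have h0 : (0 : ℝ) ≤ max (∏ j, ‖toLp 2 (v j)‖) 1 := le_max_of_le_right zero_le_one
  refine (pi_norm_le_iff_of_nonneg h0).2 fun i => (pi_norm_le_iff_of_nonneg h0).2 fun l => ?_
  rw [Real.norm_eq_abs]
  exact (abs_balance_apply_le v i l).trans (Real.rpow_inv_natCast_le_max_one (by positivity) _)

end Balance

section CP

variable {D n R : ℕ} {p : Fin D → ℕ}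

theorem cpDecomp_balance (θ : Fin R → ∀ d : Fin D, Fin (p d) → ℝ) :
    cpDecomp R (fun r => balance (θ r)) = cpDecomp R θ := by
  funext i
  simp only [cpDecomp, prod_balance_apply]

theorem floss_balance (y : Fin n → ℝ) (X : Fin n → (∀ d : Fin D, Fin (p d)) → ℝ)
    (θ : Fin R → ∀ d : Fin D, Fin (p d) → ℝ) :
    floss R y X (fun r => balance (θ r)) = floss R y X θ := by
  simp only [floss, cpDecomp_balance]

theorem norm_balance_le_mag (θ : Fin R → ∀ d : Fin D, Fin (p d) → ℝ) :
    ‖fun r => balance (θ r)‖ ≤ max (mag θ) 1 := by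
  refine (pi_norm_le_iff_of_nonneg (le_max_of_le_right zero_le_one)).2 fun r => ?_
  refine (norm_balance_le (θ r)).trans (max_le_max_right 1 ?_)
  simp only [mag, Real.sqrt_sum_sq_eq_norm_toLp]
  exact single_le_sum (f := fun r => ∏ d, ‖WithLp.toLp 2 (θ r d)‖)
    (fun r _ => by positivity) (mem_univ r)

theorem continuous_floss (y : Fin n → ℝ) (X : Fin n → (∀ d : Fin D, Fin (p d)) → ℝ) :
    Continuous (floss (p := p) R y X) := by
  unfold floss cpDecomp
  fun_prop

end CP

theorem stmt4_general {D n R : ℕ} {p : Fin D → ℕ}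
    (y : Fin n → ℝ) (X : Fin n → (∀ d : Fin D, Fin (p d)) → ℝ)
    (θ : ℕ → Fin R → ∀ d : Fin D, Fin (p d) → ℝ)
    (hconv : Tendsto (fun t => floss R y X (θ t)) atTop
      (nhds (⨅ θ' : Fin R → ∀ d : Fin D, Fin (p d) → ℝ, floss R y X θ')))
    (hnotattained : ¬ ∃ θ' : Fin R → ∀ d : Fin D, Fin (p d) → ℝ,
      floss R y X θ' = ⨅ θ'' : Fin R → ∀ d : Fin D, Fin (p d) → ℝ, floss R y X θ'') :
    Tendsto (fun t => mag (θ t)) atTop atTop := by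
  refine tendsto_atTop_of_tendsto_iInf_of_not_attained (g := mag) (u := θ) (continuous_floss y X)
    (fun C => ⟨Metric.closedBall 0 (max C 1), isCompact_closedBall _ _, ?_⟩) hconv hnotattained
  rintro _ ⟨θ', hθ' : mag θ' ≤ C, rfl⟩
  exact ⟨fun r => balance (θ' r),
    mem_closedBall_zero_iff.2 ((norm_balance_le_mag θ').trans (max_le_max_right 1 hθ')),
    floss_balance y X θ'⟩

/-- if `f(θ_t) → inf_θ f(θ)` and the infimum of `f` is not attained by any
CP parameter `θ`, then the magnitude diverges: `M(θ_t) → ∞`. -/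
theorem stmt4 {D n R : ℕ} {p : Fin D → ℕ} (hR : 1 ≤ R)
    (y : Fin n → ℝ) (X : Fin n → (∀ d : Fin D, Fin (p d)) → ℝ)
    (θ : ℕ → Fin R → ∀ d : Fin D, Fin (p d) → ℝ)
    (hconv : Tendsto (fun t => floss R y X (θ t)) atTop
      (nhds (⨅ θ' : Fin R → ∀ d : Fin D, Fin (p d) → ℝ, floss R y X θ')))
    (hnotattained : ¬ ∃ θ' : Fin R → ∀ d : Fin D, Fin (p d) → ℝ,
      floss R y X θ' = ⨅ θ'' : Fin R → ∀ d : Fin D, Fin (p d) → ℝ, floss R y X θ'') :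
    Tendsto (fun t => mag (θ t)) atTop atTop :=
  stmt4_general y X θ hconv hnotattained
end
end

section
/- Suppose Assumption 1 holds with constant S₁ > 0. Let {θ_t} be a sequence of CP parameters with all columns β_{d,r,t} ≠ 0 and f(θ_t) → inf_θ f(θ). Then there exist constants C₁, C₂ > 0 depending only on S₁, and an index t₀ depending on the sequence, such that for all t ≥ t₀, λ_min(D_tᵀ D_t) ≤ R(C₁ + C₂‖y‖²) / (n · M(θ_t)²). -/
open scoped BigOperators
open Filter Matrix

noncomputable section

set_option maxHeartbeats 1000000

/-- Minimum eigenvalue of a (symmetric) real matrix, via the Rayleigh quotient. -/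
def lambdaMin {m : Type*} [Fintype m] (M : Matrix m m ℝ) : ℝ :=
  sInf {c : ℝ | ∃ x : m → ℝ, (∑ i, x i ^ 2) = 1 ∧ c = x ⬝ᵥ M.mulVec x}

/-- The matrix `D_t` whose `r`-th column is the normalized Kronecker (rank-one) vector
`(β_{1,r} ⊗ ⋯ ⊗ β_{D,r}) / ∏_d ‖β_{d,r}‖`. -/
def dMat {D R : ℕ} {p : Fin D → ℕ} (θ : Fin R → ∀ d : Fin D, Fin (p d) → ℝ) :
    Matrix (∀ d : Fin D, Fin (p d)) (Fin R) ℝ :=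
  Matrix.of fun j r => (∏ d, θ r d (j d)) / ∏ d, Real.sqrt (∑ l, θ r d l ^ 2)

/-- The factor matrix `B_d = (β_{d,1}, …, β_{d,R})`. -/
def bMat {D R : ℕ} {p : Fin D → ℕ} (θ : Fin R → ∀ d : Fin D, Fin (p d) → ℝ) (d : Fin D) :
    Matrix (Fin (p d)) (Fin R) ℝ :=
  Matrix.of fun l r => θ r d l

/-! ### Auxiliary lemmas -/

lemma quad_eq {ι : Type*} [Fintype ι] {R : ℕ} (M : Matrix ι (Fin R) ℝ) (v : Fin R → ℝ) :
    v ⬝ᵥ (Mᵀ * M).mulVec v = ∑ j, (M.mulVec v j) ^ 2 := by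
  rw [← Matrix.mulVec_mulVec, Matrix.dotProduct_mulVec, Matrix.vecMul_transpose]
  simp [dotProduct, sq]

lemma lambdaMin_le_of_unit {ι : Type*} [Fintype ι] {R : ℕ} (M : Matrix ι (Fin R) ℝ)
    (x : Fin R → ℝ) (hx : ∑ i, x i ^ 2 = 1) :
    lambdaMin (Mᵀ * M) ≤ x ⬝ᵥ (Mᵀ * M).mulVec x := by
  apply csInf_le
  · refine ⟨0, ?_⟩; rintro c ⟨v, hv, rfl⟩
    rw [quad_eq]; positivity
  · exact ⟨x, hx, rfl⟩

/-- Scaling a CP decomposition (order ≥ 1) keeps a rank-`R` decomposition. -/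
lemma smul_cpDecomp {D R : ℕ} {p : Fin D → ℕ} (hD : 0 < D) (c : ℝ)
    (θ' : Fin R → ∀ d : Fin D, Fin (p d) → ℝ) :
    ∃ β : Fin R → ∀ d : Fin D, Fin (p d) → ℝ,
      (fun j => c * cpDecomp R θ' j) = cpDecomp R β := by
  set d₀ : Fin D := ⟨0, hD⟩
  refine ⟨fun r d => if d = d₀ then c • θ' r d else θ' r d, funext fun j => ?_⟩
  unfold cpDecomp
  rw [Finset.mul_sum]
  refine Finset.sum_congr rfl fun r _ => ?_
  have h1 : ∀ d : Fin D, (if d = d₀ then c • θ' r d else θ' r d) (j d)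
      = (if d = d₀ then c else 1) * θ' r d (j d) := by
    intro d; split <;> simp
  calc c * ∏ d, θ' r d (j d)
      = (∏ d : Fin D, if d = d₀ then c else 1) * ∏ d, θ' r d (j d) := by
        rw [Finset.prod_ite_eq' Finset.univ d₀ (fun _ => c)]
        simp
    _ = ∏ d, ((if d = d₀ then c else 1) * θ' r d (j d)) := by
        rw [Finset.prod_mul_distrib]
    _ = ∏ d, (if d = d₀ then c • θ' r d else θ' r d) (j d) :=
        (Finset.prod_congr rfl fun d _ => (h1 d)).symm

/-- under the restricted eigenvalue condition (Assumption 1) with constant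
`S₁ > 0`, for any sequence of CP parameters with nonzero columns and `f(θ_t) → inf f`,
there are constants `C₁, C₂ > 0` and an index `t₀` such that for `t ≥ t₀`,
`λ_min(D_tᵀD_t) ≤ R(C₁ + C₂‖y‖²)/(n·M(θ_t)²)`. -/
theorem stmt5 {D n R : ℕ} {p : Fin D → ℕ} (hR : 1 ≤ R)
    (y : Fin n → ℝ) (X : Fin n → (∀ d : Fin D, Fin (p d)) → ℝ)
    (S₁ : ℝ) (hS₁ : 0 < S₁)
    -- Assumption 1 (restricted eigenvalue)
    (hRE : ∀ A : (∀ d : Fin D, Fin (p d)) → ℝ, frob A = 1 → cpRank A ≤ R →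
      S₁ ≤ (1 / (n : ℝ)) * ∑ i, (∑ j, A j * X i j) ^ 2)
    (θ : ℕ → Fin R → ∀ d : Fin D, Fin (p d) → ℝ)
    (hnz : ∀ t r d, θ t r d ≠ 0)
    (hconv : Tendsto (fun t => floss R y X (θ t)) atTop
      (nhds (⨅ θ' : Fin R → ∀ d : Fin D, Fin (p d) → ℝ, floss R y X θ'))) :
    ∃ C₁ > (0 : ℝ), ∃ C₂ > (0 : ℝ), ∃ t₀ : ℕ, ∀ t ≥ t₀,
      lambdaMin ((dMat (θ t))ᵀ * dMat (θ t)) ≤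
        R * (C₁ + C₂ * ∑ i, y i ^ 2) / (n * (mag (θ t)) ^ 2) := by
  have r₀ : Fin R := ⟨0, hR⟩
  -- all dimensions are positive
  have hp : ∀ d, 0 < p d := by
    intro d
    rcases Nat.eq_zero_or_pos (p d) with h | h
    · exfalso
      apply hnz 0 r₀ d
      funext l
      exact absurd l.2 (by omega)
    · exact h
  -- n is positive
  have hn : 0 < n := by
    rcases Nat.eq_zero_or_pos n with hn0 | h
    · exfalso
      obtain ⟨A, hfA, hrA⟩ : ∃ A : (∀ d : Fin D, Fin (p d)) → ℝ,
          frob A = 1 ∧ cpRank A ≤ R := by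
        rcases Nat.eq_zero_or_pos D with hD | hD
        · subst hD
          refine ⟨fun _ => 1, ?_, ?_⟩
          · simp [frob]
          · refine le_trans (Nat.sInf_le ?_) hR
            exact ⟨fun _ _ => (fun _ => 1), funext fun j => by simp [cpDecomp]⟩
        · set j₀ : ∀ d : Fin D, Fin (p d) := fun d => ⟨0, hp d⟩ with hj₀
          refine ⟨fun j => if j = j₀ then 1 else 0, ?_, ?_⟩
          · have h : (∑ j : (∀ d : Fin D, Fin (p d)),
                (if j = j₀ then (1:ℝ) else 0) ^ 2) = 1 := by
              rw [Finset.sum_eq_single j₀]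
              · simp
              · intro b _ hb; simp [hb]
              · intro h; exact absurd (Finset.mem_univ _) h
            unfold frob
            rw [h, Real.sqrt_one]
          · refine le_trans (Nat.sInf_le ?_) le_rfl
            refine ⟨fun r d l => if r = r₀ then (if l = j₀ d then 1 else 0) else 0,
              funext fun j => ?_⟩
            unfold cpDecomp
            rw [Finset.sum_eq_single r₀]
            · by_cases hj : j = j₀
              · subst hj; simp
              · rw [if_neg hj]
                have hex : ∃ d, j d ≠ j₀ d := by
                  by_contra hc
                  push_neg at hc
                  exact hj (funext hc)
                obtain ⟨d, hd⟩ := hex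
                exact (Finset.prod_eq_zero (Finset.mem_univ d) (by simp [hd])).symm
            · intro r _ hr
              exact Finset.prod_eq_zero (Finset.mem_univ ⟨0, hD⟩) (by simp [hr])
            · intro h; exact absurd (Finset.mem_univ r₀) h
      have := hRE A hfA hrA
      subst hn0
      simp at this
      linarith
    · exact h
  have hnpos : (0:ℝ) < (n:ℝ) := by exact_mod_cast hn
  -- infimum is bounded
  have hfl0 : ∀ θ' : Fin R → ∀ d : Fin D, Fin (p d) → ℝ, 0 ≤ floss R y X θ' := by
    intro θ'; unfold floss; positivity
  set L : ℝ := ⨅ θ' : Fin R → ∀ d : Fin D, Fin (p d) → ℝ, floss R y X θ' with hLdef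
  have hbdd : BddBelow (Set.range fun θ' : Fin R → ∀ d : Fin D, Fin (p d) → ℝ =>
      floss R y X θ') := ⟨0, by rintro _ ⟨θ', rfl⟩; exact hfl0 θ'⟩
  have hL0 : L ≤ floss R y X (θ 0) := ciInf_le hbdd (θ 0)
  set F₀ : ℝ := floss R y X (θ 0) with hF₀def
  have hF₀ : 0 ≤ F₀ := hfl0 (θ 0)
  -- eventual bound on the loss
  have hev : ∀ᶠ t in atTop, floss R y X (θ t) < L + 1 :=
    hconv.eventually_lt_const (by linarith)
  obtain ⟨t₀, ht₀⟩ := eventually_atTop.mp hev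
  -- constants
  refine ⟨(2 * F₀ + 2) / S₁, by positivity, 2 / S₁, by positivity, t₀, fun t ht => ?_⟩
  set Y : ℝ := ∑ i, y i ^ 2 with hYdef
  have hY : 0 ≤ Y := by rw [hYdef]; positivity
  -- per-column norms
  set x : Fin R → ℝ := fun r => ∏ d, Real.sqrt (∑ l, θ t r d l ^ 2) with hxdef
  have hxpos : ∀ r, 0 < x r := by
    intro r
    refine Finset.prod_pos fun d _ => Real.sqrt_pos.2 ?_
    have hex : ∃ l, θ t r d l ≠ 0 := by
      by_contra hc
      push_neg at hc
      exact hnz t r d (funext hc)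
    obtain ⟨l, hl⟩ := hex
    exact Finset.sum_pos' (fun l _ => sq_nonneg _)
      ⟨l, Finset.mem_univ l, lt_of_le_of_ne (sq_nonneg _) (Ne.symm (pow_ne_zero 2 hl))⟩
  set S : ℝ := ∑ r, x r ^ 2 with hSdef
  have hSpos : 0 < S := Finset.sum_pos (fun r _ => pow_pos (hxpos r) 2)
    ⟨r₀, Finset.mem_univ r₀⟩
  have hmag : mag (θ t) = ∑ r, x r := rfl
  have hMpos : 0 < mag (θ t) := by
    rw [hmag]; exact Finset.sum_pos (fun r _ => hxpos r) ⟨r₀, Finset.mem_univ r₀⟩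
  -- Cauchy-Schwarz: M² ≤ R S
  have hMS : mag (θ t) ^ 2 ≤ (R : ℝ) * S := by
    rw [hmag, hSdef]
    simpa using sq_sum_le_card_mul_sum_sq (s := Finset.univ) (f := x)
  -- the coefficient tensor
  set A : (∀ d : Fin D, Fin (p d)) → ℝ := cpDecomp R (θ t) with hAdef
  set F : ℝ := ∑ j, A j ^ 2 with hFdef
  have hFnn : 0 ≤ F := by rw [hFdef]; positivity
  -- D x = A for x the vector of column norms
  have hDx : ∀ j, ∑ r, dMat (θ t) j r * x r = A j := fun j =>
    Finset.sum_congr rfl fun r _ => div_mul_cancel₀ _ (hxpos r).ne'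
  -- Rayleigh bound: λmin ≤ F / S
  have hray : lambdaMin ((dMat (θ t))ᵀ * dMat (θ t)) ≤ F / S := by
    set s : ℝ := Real.sqrt S with hsdef
    have hspos : 0 < s := Real.sqrt_pos.2 hSpos
    have hs2 : s ^ 2 = S := Real.sq_sqrt hSpos.le
    have hv1 : ∑ r, (x r / s) ^ 2 = 1 := by
      simp only [div_pow]
      rw [← Finset.sum_div, hs2, ← hSdef, div_self hSpos.ne']
    have hval := lambdaMin_le_of_unit (dMat (θ t)) (fun r => x r / s) hv1
    rw [quad_eq] at hval
    have hmv : ∀ j, (dMat (θ t)).mulVec (fun r => x r / s) j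
        = ∑ r, dMat (θ t) j r * (x r / s) := fun j => rfl
    have hDv : ∀ j, (dMat (θ t)).mulVec (fun r => x r / s) j = A j / s := by
      intro j
      rw [hmv j, ← hDx j, Finset.sum_div]
      exact Finset.sum_congr rfl fun r _ => by ring
    calc lambdaMin ((dMat (θ t))ᵀ * dMat (θ t))
        ≤ ∑ j, ((dMat (θ t)).mulVec (fun r => x r / s) j) ^ 2 := hval
      _ = ∑ j, (A j / s) ^ 2 := Finset.sum_congr rfl fun j _ => by rw [hDv j]
      _ = F / S := by
          simp only [div_pow]
          rw [← Finset.sum_div, hs2, hFdef]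
  -- RE bound
  have hREF : (n : ℝ) * S₁ * F ≤ 2 * Y + 2 * floss R y X (θ t) := by
    have hT : ∑ i, (∑ j, A j * X i j) ^ 2 ≤ 2 * Y + 2 * floss R y X (θ t) := by
      unfold floss
      rw [hYdef, Finset.mul_sum, Finset.mul_sum, ← Finset.sum_add_distrib]
      refine Finset.sum_le_sum fun i _ => ?_
      have h := sq_nonneg (2 * y i - ∑ j, A j * X i j)
      have hAc : cpDecomp R (θ t) = A := rfl
      rw [hAc]
      nlinarith [h]
    rcases eq_or_ne F 0 with hF0 | hF0
    · rw [hF0, mul_zero]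
      have := Finset.sum_nonneg (fun (i : Fin n) (_ : i ∈ Finset.univ) =>
        sq_nonneg (∑ j, A j * X i j))
      linarith
    have hFpos : 0 < F := lt_of_le_of_ne hFnn (Ne.symm hF0)
    set a : ℝ := Real.sqrt F with hadef
    have hapos : 0 < a := Real.sqrt_pos.2 hFpos
    have ha2 : a ^ 2 = F := Real.sq_sqrt hFpos.le
    set B : (∀ d : Fin D, Fin (p d)) → ℝ := fun j => A j / a with hBdef
    have hBsum : ∑ j, B j ^ 2 = 1 := by
      simp only [hBdef, div_pow]
      rw [← Finset.sum_div, ha2, ← hFdef, div_self hFpos.ne']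
    have hfB : frob B = 1 := by
      unfold frob
      rw [hBsum, Real.sqrt_one]
    have hrB : cpRank B ≤ R := by
      rcases Nat.eq_zero_or_pos D with hD | hD
      · -- order-0 tensors are constants; a positive constant of norm one is the constant 1
        subst hD
        refine le_trans (Nat.sInf_le ?_) hR
        refine ⟨fun _ _ => (fun _ => 1), funext fun j => ?_⟩
        have hAj : A j = (R : ℝ) := by
          rw [hAdef]; unfold cpDecomp; simp
        have hRpos : (0:ℝ) < (R:ℝ) := by exact_mod_cast hR
        have hBj : B j = 1 := by
          have h1 : ∑ i : (∀ d : Fin 0, Fin (p d)), B i ^ 2 = B j ^ 2 :=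
            Finset.sum_eq_single j (fun i _ hi => absurd (Subsingleton.elim i j) hi)
              (fun h => absurd (Finset.mem_univ j) h)
          have h2 : B j ^ 2 = 1 := by rw [← h1, hBsum]
          have hBpos : 0 < B j := by
            have hBA : B j = A j / a := rfl
            rw [hBA, hAj]; positivity
          nlinarith [h2, hBpos]
        rw [hBj]
        simp [cpDecomp]
      · obtain ⟨β, hβ⟩ := smul_cpDecomp hD a⁻¹ (θ t)
        refine Nat.sInf_le ?_
        refine ⟨β, ?_⟩
        rw [← hβ]
        funext j
        rw [hBdef]
        simp only [← hAdef]
        rw [div_eq_inv_mul]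
    have hre := hRE B hfB hrB
    have hsum : ∑ i, (∑ j, B j * X i j) ^ 2 = (∑ i, (∑ j, A j * X i j) ^ 2) / F := by
      rw [Finset.sum_div]
      refine Finset.sum_congr rfl fun i _ => ?_
      have hss : ∑ j, B j * X i j = (∑ j, A j * X i j) / a := by
        rw [Finset.sum_div]
        exact Finset.sum_congr rfl fun j _ => by rw [hBdef]; ring
      rw [hss, div_pow, ha2]
    rw [hsum] at hre
    have h2 : S₁ * ((n:ℝ) * F) ≤ (1 / (n:ℝ) * ((∑ i, (∑ j, A j * X i j) ^ 2) / F))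
        * ((n:ℝ) * F) := mul_le_mul_of_nonneg_right hre (by positivity)
    have h3 : (1 / (n:ℝ) * ((∑ i, (∑ j, A j * X i j) ^ 2) / F)) * ((n:ℝ) * F)
        = ∑ i, (∑ j, A j * X i j) ^ 2 := by
      field_simp
    rw [h3] at h2
    nlinarith [h2, hT]
  -- conclude
  have hKt : floss R y X (θ t) ≤ F₀ + 1 := le_trans (ht₀ t ht).le (by linarith)
  have h4 : (n:ℝ) * S₁ * F ≤ 2 * Y + 2 * F₀ + 2 := by linarith
  have hnF : (n:ℝ) * F ≤ (2 * F₀ + 2) / S₁ + 2 / S₁ * Y := by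
    have he : (2 * F₀ + 2) / S₁ + 2 / S₁ * Y = (2 * Y + 2 * F₀ + 2) / S₁ := by
      field_simp
      ring
    rw [he, le_div_iff₀ hS₁]
    nlinarith [h4]
  have hfin : F / S ≤ (R:ℝ) * ((2 * F₀ + 2) / S₁ + 2 / S₁ * Y) / ((n:ℝ) * mag (θ t) ^ 2) := by
    rw [div_le_div_iff₀ hSpos (by positivity)]
    have hC : 0 ≤ (2 * F₀ + 2) / S₁ + 2 / S₁ * Y := by positivity
    have e1 : F * ((n:ℝ) * mag (θ t) ^ 2) ≤ F * ((n:ℝ) * ((R:ℝ) * S)) := by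
      refine mul_le_mul_of_nonneg_left ?_ hFnn
      exact mul_le_mul_of_nonneg_left hMS hnpos.le
    have e3 : ((n:ℝ) * F) * ((R:ℝ) * S) ≤ ((2 * F₀ + 2) / S₁ + 2 / S₁ * Y) * ((R:ℝ) * S) := by
      refine mul_le_mul_of_nonneg_right hnF ?_
      have hR1 : (0:ℝ) ≤ (R:ℝ) := Nat.cast_nonneg R
      positivity
    nlinarith [e1, e3]
  exact hray.trans hfin
end
end
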